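/- arXiv:1605.06572 — 6 statements merged into one kernel-verified Lean document; each statement's English description precedes it below -/
import Mathlib

section
/- Let c be the edge coloring of Q_n defined as follows: for an edge xy with x of weight k and y of weight k+1, with common prefix p (the common initial segment of the binary strings x and y before the position where they differ), set c(xy) = (k mod 2, w(p) mod 2), where w(p) is the number of 1's in p. Then there is no monochromatic 6-cycle in Q_n under c. -/
/-- Hamming weight of a binary string. -/
def wt {n : ℕ} (x : Fin n → Bool) : ℕ := (Finset.univ.filter fun i => x i = true).card

/-- `x` and `y` differ exactly at the coordinate `j`. -/
def diffAt {n : ℕ} (x y : Fin n → Bool) (j : Fin n) : Prop :=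
  x j ≠ y j ∧ ∀ i, i ≠ j → x i = y i

/-- Weight of the prefix of `x` strictly before position `j`. -/
def prefWt {n : ℕ} (x : Fin n → Bool) (j : Fin n) : ℕ :=
  (Finset.univ.filter fun i => i < j ∧ x i = true).card

/-- The coloring `c`: for an edge `xy` differing at position `j`, with lower
endpoint of weight `k` and common prefix `p`, the color is `(k mod 2, w(p) mod 2)`. -/
def edgeColor {n : ℕ} (x y : Fin n → Bool) (j : Fin n) : ℕ × ℕ :=
  if wt x ≤ wt y then (wt x % 2, prefWt x j % 2) else (wt y % 2, prefWt y j % 2)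

/-!
All edges of a monochromatic 6-cycle have lower endpoints whose weights have the same parity;
consecutive edges share a vertex, so these weights are all equal to some `k`. A closed walk flips
every direction an even number of times, and six distinct vertices need at least three directions,
so the cycle uses exactly three directions `a < b < c`, each twice. The two edges in direction `b`
have distinct lower endpoints of weight `k` agreeing outside `{a, c}`; they therefore differ at both
`a` and `c`, so their prefixes before `b` differ in weight by exactly one, and the second color
coordinate tells the two edges apart.
-/

open Finset Function

theorem card_filter_eq_card_filter_add_one {α : Type*} {s : Finset α} {p q : α → Prop}
    [DecidablePred p] [DecidablePred q] {t : α} (ht : t ∈ s) (hpt : ¬ p t) (hqt : q t)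
    (h : ∀ i ∈ s, i ≠ t → (p i ↔ q i)) :
    #(s.filter q) = #(s.filter p) + 1 := by
  rw [← card_cons (by simp [hpt] : t ∉ s.filter p)]
  congr 1
  ext i
  by_cases hi : i = t
  · subst hi; simp [ht, hqt]
  · simp only [mem_filter, mem_cons, hi, false_or]
    exact and_congr_right fun his => (h i his hi).symm

section Cube

variable {n : ℕ}

theorem diffAt.symm {x y : Fin n → Bool} {j : Fin n} (h : diffAt x y j) : diffAt y x j :=
  ⟨h.1.symm, fun i hi => (h.2 i hi).symm⟩

theorem diffAt.eq_update {x y : Fin n → Bool} {j : Fin n} (h : diffAt x y j)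
    (hx : x j = false) : y = update x j true := by
  funext i
  by_cases hi : i = j
  · subst hi; simpa [hx] using h.1.symm
  · rw [update_of_ne hi, h.2 i hi]

theorem wt_update_true {z : Fin n → Bool} {j : Fin n} (hz : z j = false) :
    wt (update z j true) = wt z + 1 :=
  card_filter_eq_card_filter_add_one (mem_univ j) (by simp [hz]) (by simp)
    fun i _ hi => by rw [update_of_ne hi]

theorem wt_ne_of_diffAt {x y : Fin n → Bool} {j : Fin n} (h : diffAt x y j) : wt x ≠ wt y := by
  cases hx : x j
  · rw [h.eq_update hx, wt_update_true hx]; omega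
  · have hy : y j = false := by simpa [hx] using h.1.symm
    rw [h.symm.eq_update hy, wt_update_true hy]; omega

theorem prefWt_eq_add_one {x y : Fin n → Bool} {a b : Fin n} (hab : a < b)
    (hx : x a = false) (hy : y a = true) (h : ∀ i < b, i ≠ a → x i = y i) :
    prefWt y b = prefWt x b + 1 :=
  card_filter_eq_card_filter_add_one (mem_univ a) (by simp [hx]) ⟨hab, hy⟩
    fun i _ hi => and_congr_right fun hib => by rw [h i hib hi]

/-- Equal weights force `x` and `y` to differ at both `a` and `c`, and only `a` lies in the prefix
before `b`. -/
theorem prefWt_mod_two_ne {x y : Fin n → Bool} {a b c : Fin n} (hab : a < b) (hbc : b < c)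
    (hne : x ≠ y) (hw : wt x = wt y) (hagree : ∀ i, i ≠ a → i ≠ c → x i = y i) :
    prefWt x b % 2 ≠ prefWt y b % 2 := by
  have ha : x a ≠ y a := by
    intro ha
    have hc : x c ≠ y c := fun hc => hne <| funext fun i =>
      if hia : i = a then hia ▸ ha else if hic : i = c then hic ▸ hc else hagree i hia hic
    exact wt_ne_of_diffAt ⟨hc, fun i hic => if hia : i = a then hia ▸ ha else hagree i hia hic⟩ hw
  have hprefix : ∀ i < b, i ≠ a → x i = y i := fun i hib hia =>
    hagree i hia (ne_of_lt (hib.trans hbc))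
  cases hx : x a
  · have hy : y a = true := by simpa [hx] using ha.symm
    rw [prefWt_eq_add_one hab hx hy hprefix]; omega
  · have hy : y a = false := by simpa [hx] using ha.symm
    rw [prefWt_eq_add_one hab hy hx fun i hib hia => (hprefix i hib hia).symm]; omega

theorem exists_lower_of_diffAt {x y : Fin n → Bool} {j : Fin n} (h : diffAt x y j) :
    ∃ z : Fin n → Bool, z j = false ∧ s(x, y) = s(z, update z j true) ∧
      edgeColor x y j = (wt z % 2, prefWt z j % 2) := by
  cases hx : x j
  · have hy := h.eq_update hx
    refine ⟨x, hx, by rw [hy], ?_⟩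
    rw [edgeColor, if_pos (by rw [hy, wt_update_true hx]; omega)]
  · have hy : y j = false := by simpa [hx] using h.1.symm
    have hx' := h.symm.eq_update hy
    refine ⟨y, hy, by rw [hx', Sym2.eq_swap], ?_⟩
    rw [edgeColor, if_neg (by rw [hx', wt_update_true hy]; omega)]

theorem wt_eq_or_eq_add_one_of_mem {x z : Fin n → Bool} {j : Fin n} (hz : z j = false)
    (hx : x ∈ s(z, update z j true)) : wt x = wt z ∨ wt x = wt z + 1 := by
  rcases Sym2.mem_iff.mp hx with rfl | rfl
  · exact Or.inl rfl
  · exact Or.inr (wt_update_true hz)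

theorem apply_eq_of_mem {x z : Fin n → Bool} {j t : Fin n} (hx : x ∈ s(z, update z j true))
    (ht : t ≠ j) : x t = z t := by
  rcases Sym2.mem_iff.mp hx with rfl | rfl
  · rfl
  · exact update_of_ne ht _ _

end Cube

open Fin.NatCast in
theorem Fin.apply_eq_apply_zero_of_forall_add_one {m : ℕ} [NeZero m] {β : Type*} {f : Fin m → β}
    (h : ∀ i, f (i + 1) = f i) (i : Fin m) : f i = f 0 := by
  have hk : ∀ k : ℕ, f (k : Fin m) = f 0 := by
    intro k
    induction k with
    | zero => simp
    | succ k ih => rw [Nat.cast_succ, h, ih]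
  simpa using hk i

theorem Fin.eq_of_sym2_eq_of_injective {m : ℕ} [NeZero m] (hm : 3 ≤ m) {α : Type*}
    {v : Fin m → α} (hv : Injective v) {i i' : Fin m}
    (h : s(v i, v (i + 1)) = s(v i', v (i' + 1))) : i = i' := by
  rcases Sym2.eq_iff.mp h with ⟨h1, -⟩ | ⟨h1, h2⟩
  · exact hv h1
  · obtain rfl := hv h1
    have h2 : (1 + 1 : Fin m) = 0 := by simpa [add_assoc] using hv h2
    have := congrArg Fin.val h2
    simp [Fin.val_add, Nat.mod_eq_of_lt (show 1 < m by omega),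
      Nat.mod_eq_of_lt (show 2 < m by omega)] at this

section ClosedWalk

variable {m n : ℕ} [NeZero m] {v : Fin m → Fin n → Bool} {j : Fin m → Fin n}

theorem apply_eq_apply_zero_of_notMem_image (hwalk : ∀ i, diffAt (v i) (v (i + 1)) (j i))
    {t : Fin n} (ht : t ∉ univ.image j) (i : Fin m) : v i t = v 0 t :=
  Fin.apply_eq_apply_zero_of_forall_add_one (f := fun i => v i t)
    (fun i => ((hwalk i).2 t fun hti => ht (hti ▸ mem_image_of_mem j (mem_univ i))).symm) i

theorem even_card_flips (hwalk : ∀ i, diffAt (v i) (v (i + 1)) (j i)) (t : Fin n) :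
    Even #{i | j i = t} := by
  let g : Fin m → ZMod 2 := fun i => if v i t then 1 else 0
  have hstep : ∀ i, g (i + 1) = g i + if j i = t then 1 else 0 := by
    intro i
    by_cases hji : j i = t
    · subst hji
      simp only [g, if_true, Bool.eq_not.mpr (hwalk i).1.symm]
      cases v i (j i) <;> decide
    · simp [g, hji, (hwalk i).2 t (Ne.symm hji)]
  have hsum : ∑ i, g (i + 1) = ∑ i, g i := Fintype.sum_equiv (Equiv.addRight 1) _ _ fun _ => rfl
  simp only [hstep, sum_add_distrib, add_eq_left, sum_boole] at hsum
  exact (ZMod.natCast_eq_zero_iff_even).mp hsum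

theorem two_le_card_flips (hwalk : ∀ i, diffAt (v i) (v (i + 1)) (j i)) {t : Fin n}
    (ht : t ∈ univ.image j) : 2 ≤ #{i | j i = t} := by
  obtain ⟨i, -, rfl⟩ := mem_image.mp ht
  have hpos : 0 < #{i' | j i' = j i} := card_pos.mpr ⟨i, by simp⟩
  obtain ⟨r, hr⟩ := even_card_flips hwalk (j i)
  omega

theorem two_mul_card_image_le (hwalk : ∀ i, diffAt (v i) (v (i + 1)) (j i)) :
    2 * #(univ.image j) ≤ m :=
  calc 2 * #(univ.image j) = ∑ _t ∈ univ.image j, 2 := by rw [sum_const, smul_eq_mul, mul_comm]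
    _ ≤ ∑ t ∈ univ.image j, #{i | j i = t} := sum_le_sum fun t ht => two_le_card_flips hwalk ht
    _ = m := by rw [← card_eq_sum_card_image, card_univ, Fintype.card_fin]

/-- A vertex of a closed walk is determined by its values on the flipped coordinates. -/
theorem le_two_pow_card_image (hv : Injective v) (hwalk : ∀ i, diffAt (v i) (v (i + 1)) (j i)) :
    m ≤ 2 ^ #(univ.image j) := by
  have hrestrict : Injective fun i (t : univ.image j) => v i t := by
    intro i i' h
    apply hv
    funext t
    by_cases ht : t ∈ univ.image j
    · exact congrFun h ⟨t, ht⟩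
    · rw [apply_eq_apply_zero_of_notMem_image hwalk ht i,
        apply_eq_apply_zero_of_notMem_image hwalk ht i']
  simpa only [Fintype.card_fin, Fintype.card_fun, Fintype.card_bool, Fintype.card_coe] using
    Fintype.card_le_of_injective _ hrestrict

theorem wt_lower_eq_of_mod_two_eq {lo : Fin m → Fin n → Bool} (hlo : ∀ i, lo i (j i) = false)
    (hedge : ∀ i, s(v i, v (i + 1)) = s(lo i, update (lo i) (j i) true))
    (hpar : ∀ i, wt (lo i) % 2 = wt (lo 0) % 2) (i : Fin m) : wt (lo i) = wt (lo 0) := by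
  refine Fin.apply_eq_apply_zero_of_forall_add_one (f := fun i => wt (lo i)) (fun i => ?_) i
  have h₁ := wt_eq_or_eq_add_one_of_mem (hlo i) (hedge i ▸ Sym2.mem_mk_right _ _)
  have h₂ := wt_eq_or_eq_add_one_of_mem (hlo (i + 1)) (hedge (i + 1) ▸ Sym2.mem_mk_left _ _)
  have := hpar i
  have := hpar (i + 1)
  omega

end ClosedWalk

/-- Six distinct vertices need at least three directions (`6 ≤ 2 ^ k`), and each direction is
used at least twice (`2 * k ≤ 6`). -/
theorem exists_middle_flipped_twice {n : ℕ} {v : Fin 6 → Fin n → Bool} {j : Fin 6 → Fin n}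
    (hv : Injective v) (hwalk : ∀ i, diffAt (v i) (v (i + 1)) (j i)) :
    ∃ a b c : Fin n, a < b ∧ b < c ∧ (∀ t, t ≠ a → t ≠ b → t ≠ c → ∀ i, v i t = v 0 t) ∧
      ∃ i₁ i₂, i₁ ≠ i₂ ∧ j i₁ = b ∧ j i₂ = b := by
  have hcard : #(univ.image j) = 3 := by
    have hlow := le_two_pow_card_image hv hwalk
    have hhigh := two_mul_card_image_le hwalk
    by_contra hne
    have hle : #(univ.image j) ≤ 2 := by omega
    have := Nat.pow_le_pow_right two_pos hle
    omega
  obtain ⟨f, hf⟩ : ∃ f : Fin 3 ↪o Fin n, Set.range f = univ.image j :=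
    ⟨_, range_orderEmbOfFin _ hcard⟩
  refine ⟨f 0, f 1, f 2, f.strictMono (by decide), f.strictMono (by decide), ?_, ?_⟩
  · intro t h0 h1 h2
    apply apply_eq_apply_zero_of_notMem_image hwalk
    rw [← mem_coe, ← hf]
    rintro ⟨k, rfl⟩
    fin_cases k <;> simp_all
  · have hb := two_le_card_flips hwalk (mem_coe.mp (hf ▸ Set.mem_range_self 1))
    obtain ⟨i₁, hi₁, i₂, hi₂, hne⟩ := one_lt_card.mp hb
    exact ⟨i₁, i₂, hne, (mem_filter.mp hi₁).2, (mem_filter.mp hi₂).2⟩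

/-- There is no monochromatic 6-cycle in `Q_n` under the coloring `c`. -/
theorem stmt2 (n : ℕ) :
    ¬ ∃ (v : Fin 6 → (Fin n → Bool)) (j : Fin 6 → Fin n),
      Function.Injective v ∧
      (∀ i, diffAt (v i) (v (i + 1)) (j i)) ∧
      (∀ i : Fin 6, edgeColor (v i) (v (i + 1)) (j i) = edgeColor (v 0) (v 1) (j 0)) := by
  rintro ⟨v, j, hv, hwalk, hcol⟩
  choose lo hlo hedge hcolor using fun i => exists_lower_of_diffAt (hwalk i)
  have hsame : ∀ i, (wt (lo i) % 2, prefWt (lo i) (j i) % 2) =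
      (wt (lo 0) % 2, prefWt (lo 0) (j 0) % 2) :=
    fun i => (hcolor i).symm.trans ((hcol i).trans (hcolor 0))
  have hlevel := wt_lower_eq_of_mod_two_eq hlo hedge fun i => congrArg Prod.fst (hsame i)
  obtain ⟨a, b, c, hab, hbc, hconst, i₁, i₂, hne, hj₁, hj₂⟩ := exists_middle_flipped_twice hv hwalk
  have hlo_ne : lo i₁ ≠ lo i₂ := fun h =>
    hne (Fin.eq_of_sym2_eq_of_injective (by norm_num) hv (by rw [hedge, hedge, h, hj₁, hj₂]))
  have hagree : ∀ t, t ≠ a → t ≠ c → lo i₁ t = lo i₂ t := by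
    intro t hta htc
    by_cases htb : t = b
    · rw [htb, ← hj₁, hlo, hj₁, ← hj₂, hlo]
    · have hsrc : ∀ i, v i ∈ s(lo i, update (lo i) (j i) true) :=
        fun i => hedge i ▸ Sym2.mem_mk_left _ _
      rw [← apply_eq_of_mem (hsrc i₁) (hj₁ ▸ htb), ← apply_eq_of_mem (hsrc i₂) (hj₂ ▸ htb),
        hconst t hta htb htc i₁, hconst t hta htb htc i₂]
  have hpref : prefWt (lo i₁) b % 2 = prefWt (lo i₂) b % 2 := by
    have h₁ := congrArg Prod.snd (hsame i₁)
    have h₂ := congrArg Prod.snd (hsame i₂)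
    simp only [hj₁, hj₂] at h₁ h₂
    rw [h₁, h₂]
  exact prefWt_mod_two_ne hab hbc hlo_ne ((hlevel i₁).trans (hlevel i₂).symm) hagree hpref
end

section
/- Let C = x_1, y_1, x_2, y_2, ..., x_5, y_5, x_1 be a 10-cycle in Q_n alternating between levels k and k+1, with y_i = x_i ∪ x_{i+1} (indices mod 5). Let I(C) be the set of coordinates in which x_i and x_{i+1} differ for some i. Then |I(C)| ≠ 4. -/
/-!
Every coordinate outside `I(C)` has the same value on all ten vertices, so the cycle lives in
the subcube on `I(C)`: restricted to `I(C)`, the `xᵢ` are five distinct sets of a common size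
`m` and the `yᵢ` five distinct sets of size `m + 1`. With `|I(C)| = 4` this needs
`5 ≤ C(4, m)` and `5 ≤ C(4, m + 1)`, which no `m` satisfies.
-/

theorem ZMod.apply_eq_apply_zero_of_apply_add_one {m : ℕ} [NeZero m] {α : Type*} {f : ZMod m → α}
    (hf : ∀ i, f (i + 1) = f i) (i : ZMod m) : f i = f 0 := by
  suffices h : ∀ j : ℕ, f j = f 0 by simpa only [ZMod.natCast_zmod_val] using h i.val
  intro j
  induction j with
  | zero => rw [Nat.cast_zero]
  | succ j ih => rw [Nat.cast_succ, hf, ih]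

namespace Finset

variable {α : Type*} [DecidableEq α]

theorem sdiff_eq_of_forall_notMem_mem_add_one_iff {m : ℕ} [NeZero m] {x : ZMod m → Finset α}
    {I : Finset α} (h : ∀ a ∉ I, ∀ i, a ∈ x (i + 1) ↔ a ∈ x i) (i : ZMod m) :
    x i \ I = x 0 \ I := by
  ext a
  simp only [mem_sdiff, and_congr_left_iff]
  intro ha
  exact Iff.of_eq <| ZMod.apply_eq_apply_zero_of_apply_add_one (f := fun i => a ∈ x i)
    (fun i => propext (h a ha i)) i

theorem card_le_choose_of_sdiff_eq {ι : Type*} [Fintype ι] {x : ι → Finset α} {I c : Finset α}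
    {k : ℕ} (hinj : Function.Injective x) (hcard : ∀ i, (x i).card = k)
    (hsdiff : ∀ i, x i \ I = c) : Fintype.card ι ≤ I.card.choose (k - c.card) := by
  have hrestrict : ∀ i, x i ∩ I ∈ I.powersetCard (k - c.card) := fun i => by
    have := card_inter_add_card_sdiff (x i) I
    rw [hcard, hsdiff] at this
    exact mem_powersetCard.2 ⟨inter_subset_right, by omega⟩
  have hrestrict_inj : Function.Injective fun i => x i ∩ I := fun i j hij => hinj <| by
    rw [← sup_inf_sdiff (x i) I, ← sup_inf_sdiff (x j) I, hsdiff, hsdiff]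
    exact congrArg (· ∪ c) hij
  simpa only [card_univ, card_powersetCard] using
    card_le_card_of_injOn (s := univ) _ (fun i _ => hrestrict i) hrestrict_inj.injOn

end Finset

theorem Nat.not_five_le_choose_four_of_five_le_choose_four_succ (m : ℕ)
    (h : 5 ≤ Nat.choose 4 (m + 1)) : ¬ 5 ≤ Nat.choose 4 m := by
  rcases Nat.lt_or_ge 4 m with hm | hm
  · rw [Nat.choose_eq_zero_of_lt hm]
    omega
  · interval_cases m <;> simp_all [Nat.choose]

/-- For a 10-cycle `x₁,y₁,…,x₅,y₅` in `Q_n` alternating between levels `k` and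
`k+1` with `yᵢ = xᵢ ∪ xᵢ₊₁`, the set `I(C)` of coordinates in which some two
consecutive `xᵢ` differ does not have exactly 4 elements. -/
theorem stmt6 (n k : ℕ) (x y : ZMod 5 → Finset (Fin n))
    (hxinj : Function.Injective x)
    (hxcard : ∀ i, (x i).card = k)
    (hy : ∀ i, y i = x i ∪ x (i + 1))
    (hycard : ∀ i, (y i).card = k + 1)
    (hyinj : Function.Injective y) :
    {a : Fin n | ∃ i : ZMod 5,
        (a ∈ x i ∧ a ∉ x (i + 1)) ∨ (a ∉ x i ∧ a ∈ x (i + 1))}.ncard ≠ 4 := by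
  classical
  set I := {a : Fin n | ∃ i : ZMod 5,
    (a ∈ x i ∧ a ∉ x (i + 1)) ∨ (a ∉ x i ∧ a ∈ x (i + 1))}.toFinset
  rw [Set.ncard_eq_toFinset_card']
  intro hI
  have hconst : ∀ a ∉ I, ∀ i, a ∈ x (i + 1) ↔ a ∈ x i := fun a ha i => by
    simp only [I, Set.mem_toFinset, Set.mem_ofPred_eq, not_exists] at ha
    have := ha i
    tauto
  have hxsdiff := Finset.sdiff_eq_of_forall_notMem_mem_add_one_iff hconst
  have hysdiff : ∀ i, y i \ I = x 0 \ I := fun i => by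
    rw [hy, Finset.union_sdiff_distrib, hxsdiff i, hxsdiff (i + 1), Finset.union_self]
  have hc : (x 0 \ I).card ≤ k := hxcard 0 ▸ Finset.card_le_card Finset.sdiff_subset
  have hxI := Finset.card_le_choose_of_sdiff_eq hxinj hxcard hxsdiff
  have hyI := Finset.card_le_choose_of_sdiff_eq hyinj hycard hysdiff
  rw [ZMod.card, hI] at hxI hyI
  rw [Nat.sub_add_comm hc] at hyI
  exact Nat.not_five_le_choose_four_of_five_le_choose_four_succ _ hyI hxI
end

section
/- Let C = x_1, y_1, ..., x_5, y_5, x_1 be a 10-cycle in Q_n alternating between levels k and k+1 with y_i = x_i ∪ x_{i+1} (indices mod 5), and let I(C) be the set of coordinates where some consecutive x_i, x_{i+1} differ. Then |I(C)| = 5, and in the 5×5 matrix A whose i-th row is x_i restricted to I(C), the 1's in each column occur in (cyclically) consecutive rows. -/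
/-!
Consecutive `xᵢ, xᵢ₊₁` have size `k` and union of size `k + 1`, so each differs from the next
in exactly two coordinates, giving `10` pairs (coordinate, step) in total. For a fixed coordinate,
the rows containing it can never show the pattern `∈, ∉, ∈`: otherwise `yᵢ = yᵢ₊₁`. A subset of
`ZMod 5` without this pattern is a cyclic interval, and if it is proper and nonempty its
indicator changes value exactly twice around the cycle. Double counting then gives `|I(C)| = 5`.
-/

open Finset
open scoped symmDiff

namespace Finset

variable {α : Type*} [DecidableEq α]

lemma card_sdiff_eq_one_of_card_union {s t : Finset α} {k : ℕ} (ht : #t = k)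
    (hst : #(s ∪ t) = k + 1) : #(s \ t) = 1 := by
  have := card_sdiff_add_card s t
  omega

lemma union_eq_insert_of_card_sdiff_le_one {s t : Finset α} {a : α} (h : #(s \ t) ≤ 1)
    (has : a ∈ s) (hat : a ∉ t) : s ∪ t = insert a t := by
  have hsdiff : s \ t = {a} :=
    (eq_singleton_iff_unique_mem.mpr ⟨mem_sdiff.mpr ⟨has, hat⟩, fun b hb =>
      card_le_one.mp h b hb a (mem_sdiff.mpr ⟨has, hat⟩)⟩)
  rw [← sdiff_union_self_eq_union, hsdiff, singleton_union]

lemma union_eq_union_of_mem_of_notMem_of_mem {r s t : Finset α} {a : α} (hrs : #(r \ s) ≤ 1)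
    (hts : #(t \ s) ≤ 1) (hr : a ∈ r) (hs : a ∉ s) (ht : a ∈ t) : r ∪ s = s ∪ t := by
  rw [union_eq_insert_of_card_sdiff_le_one hrs hr hs, union_comm,
    union_eq_insert_of_card_sdiff_le_one hts ht hs]

lemma card_biUnion_eq_card_of_regular {ι : Type*} [Fintype ι] (f : ι → Finset α) {c : ℕ}
    (hc : 0 < c) (hf : ∀ i, #(f i) = c) (hdeg : ∀ a ∈ univ.biUnion f, #{i | a ∈ f i} = c) :
    #(univ.biUnion f) = Fintype.card ι := by
  have hbelow : ∀ i ∈ (univ : Finset ι), #((univ.biUnion f).bipartiteBelow (· ∈ f ·) i) = c := by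
    intro i _
    rw [bipartiteBelow, filter_mem_eq_inter,
      inter_eq_right.mpr (subset_biUnion_of_mem f (mem_univ i)), hf]
  exact Nat.eq_of_mul_eq_mul_right hc (card_mul_eq_card_mul _ hdeg hbelow)

end Finset

namespace ZMod

lemma exists_lt_eq_add_natCast_iff {n : ℕ} [NeZero n] (s i : ZMod n) (l : ℕ) :
    (∃ t : ℕ, t < l ∧ i = s + t) ↔ (i - s).val < l := by
  constructor
  · rintro ⟨t, ht, rfl⟩
    rw [add_sub_cancel_left, val_natCast]
    exact (Nat.mod_le t n).trans_lt ht
  · exact fun h => ⟨_, h, by rw [natCast_zmod_val, add_sub_cancel]⟩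

lemma five_exists_arc_of_no_gap (S : Finset (ZMod 5))
    (hS : ∀ i, i ∈ S → i + 1 ∉ S → i + 2 ∉ S) :
    ∃ s : ZMod 5, ∃ l : ℕ, ∀ i, i ∈ S ↔ (i - s).val < l := by
  suffices h : ∀ S : Finset (ZMod 5), (∀ i, i ∈ S → i + 1 ∉ S → i + 2 ∉ S) →
      ∃ s : ZMod 5, ∃ l : Fin 6, ∀ i, i ∈ S ↔ (i - s).val < l by
    obtain ⟨s, l, h⟩ := h S hS
    exact ⟨s, l, h⟩
  decide

lemma five_card_boundary_of_no_gap (S : Finset (ZMod 5))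
    (hS : ∀ i, i ∈ S → i + 1 ∉ S → i + 2 ∉ S) (hb : ∃ i, Xor (i ∈ S) (i + 1 ∈ S)) :
    #{i | Xor (i ∈ S) (i + 1 ∈ S)} = 2 := by
  revert S
  decide

end ZMod

theorem stmt7_general (n k : ℕ) (x y : ZMod 5 → Finset (Fin n))
    (hxcard : ∀ i, (x i).card = k)
    (hy : ∀ i, y i = x i ∪ x (i + 1))
    (hycard : ∀ i, (y i).card = k + 1)
    (hyinj : Function.Injective y) :
    {a : Fin n | ∃ i : ZMod 5,
        (a ∈ x i ∧ a ∉ x (i + 1)) ∨ (a ∉ x i ∧ a ∈ x (i + 1))}.ncard = 5 ∧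
    ∀ a : Fin n,
      (∃ i : ZMod 5, (a ∈ x i ∧ a ∉ x (i + 1)) ∨ (a ∉ x i ∧ a ∈ x (i + 1))) →
      ∃ (s : ZMod 5) (l : ℕ),
        {i : ZMod 5 | a ∈ x i} = {i : ZMod 5 | ∃ t : ℕ, t < l ∧ i = s + (t : ZMod 5)} := by
  have hunion i : #(x i ∪ x (i + 1)) = k + 1 := hy i ▸ hycard i
  have hleft i : #(x i \ x (i + 1)) = 1 := card_sdiff_eq_one_of_card_union (hxcard _) (hunion i)
  have hright i : #(x (i + 1) \ x i) = 1 :=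
    card_sdiff_eq_one_of_card_union (hxcard _) (union_comm (x i) _ ▸ hunion i)
  -- a pattern `∈, ∉, ∈` in a column would force `y i = y (i + 1)`
  have hgap a i (h₀ : a ∈ x i) (h₁ : a ∉ x (i + 1)) : a ∉ x (i + 2) := fun h₂ => by
    have h12 : i + 1 + 1 = i + 2 := by ring
    have hy_eq : y i = y (i + 1) := by
      rw [hy, hy, h12, union_eq_union_of_mem_of_notMem_of_mem (hleft i).le
        (h12 ▸ hright (i + 1)).le h₀ h₁ h₂]
    exact absurd (add_eq_left.mp (hyinj hy_eq).symm) (by decide)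
  set R : Fin n → Finset (ZMod 5) := fun a => {i | a ∈ x i}
  have hR a : ∀ i, i ∈ R a → i + 1 ∉ R a → i + 2 ∉ R a := by simpa [R] using hgap a
  have hxor a i : a ∈ x i ∆ x (i + 1) ↔ Xor (i ∈ R a) (i + 1 ∈ R a) := by
    simp [R, mem_symmDiff, Xor]
  have hI : {a : Fin n | ∃ i : ZMod 5, (a ∈ x i ∧ a ∉ x (i + 1)) ∨ (a ∉ x i ∧ a ∈ x (i + 1))}
      = ↑(univ.biUnion fun i => x i ∆ x (i + 1)) := by
    ext a
    rw [mem_coe, mem_biUnion]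
    simp [mem_symmDiff, and_comm]
  refine ⟨?_, fun a _ => ?_⟩
  · rw [hI, Set.ncard_coe_finset, card_biUnion_eq_card_of_regular _ two_pos, ZMod.card]
    · intro i
      rw [Finset.symmDiff_def, card_union_of_disjoint disjoint_sdiff_sdiff, hleft, hright,
        one_add_one_eq_two]
    · intro a ha
      simp only [hxor]
      obtain ⟨i, -, hi⟩ := mem_biUnion.mp ha
      exact ZMod.five_card_boundary_of_no_gap (R a) (hR a) ⟨i, (hxor a i).mp hi⟩
  · obtain ⟨s, l, hsl⟩ := ZMod.five_exists_arc_of_no_gap (R a) (hR a)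
    refine ⟨s, l, Set.ext fun i => ?_⟩
    simpa [R, ZMod.exists_lt_eq_add_natCast_iff] using hsl i

/-- For a 10-cycle `x₁,y₁,…,x₅,y₅` in `Q_n` alternating between levels `k` and
`k+1` with `yᵢ = xᵢ ∪ xᵢ₊₁`, the set `I(C)` of coordinates where some two
consecutive `xᵢ` differ has exactly 5 elements, and in the associated `5 × 5`
matrix (rows = restrictions of the `xᵢ` to `I(C)`) the 1's of every column
occur in cyclically consecutive rows. -/
theorem stmt7 (n k : ℕ) (x y : ZMod 5 → Finset (Fin n))
    (hxinj : Function.Injective x)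
    (hxcard : ∀ i, (x i).card = k)
    (hy : ∀ i, y i = x i ∪ x (i + 1))
    (hycard : ∀ i, (y i).card = k + 1)
    (hyinj : Function.Injective y) :
    {a : Fin n | ∃ i : ZMod 5,
        (a ∈ x i ∧ a ∉ x (i + 1)) ∨ (a ∉ x i ∧ a ∈ x (i + 1))}.ncard = 5 ∧
    ∀ a : Fin n,
      (∃ i : ZMod 5, (a ∈ x i ∧ a ∉ x (i + 1)) ∨ (a ∉ x i ∧ a ∈ x (i + 1))) →
      ∃ (s : ZMod 5) (l : ℕ),
        {i : ZMod 5 | a ∈ x i} = {i : ZMod 5 | ∃ t : ℕ, t < l ∧ i = s + (t : ZMod 5)} :=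
  stmt7_general n k x y hxcard hy hycard hyinj
end

section
/- Let C = x_1, y_1, ..., x_5, y_5, x_1 be an induced monochromatic (under coloring c) 10-cycle in Q_n alternating between levels k and k+1, with A = A(C) the associated 5×5 matrix of restrictions of the x_i to I(C). Then each row of A contains exactly two 1's. -/
/-- The color of the upward edge from the set `x` to `x ∪ {j}` (with `j ∉ x`):
parity of the level `|x|` together with parity of the weight of the common
prefix, i.e. the number of elements of `x` below `j`. -/
def ecolS {n : ℕ} (x : Finset (Fin n)) (j : Fin n) : ℕ × ℕ :=
  (x.card % 2, (x.filter fun a => a < j).card % 2)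

/-!
Let `I` be the set of coordinates that change along the cycle. Outside `I` all the `x i` agree,
so the row weight `a = #(x i ∩ I)` and the co-weight `b = #(I \ x i)` do not depend on `i`, and
`a + b = #I ≤ 5` because every step removes exactly one coordinate. Both weights are positive;
`b = 1` would give `I ⊆ y 0` and hence the chord `x 2 ⊆ y 0`. If `a = 1` or `b = 2` (in the latter
case after using chordlessness once more), the coordinates involved form a cyclic sequence `σ`,
and monochromaticity makes `F (σ i) + F (σ (i + 1))` odd for every `i` and a suitable parity
function `F`, which is impossible around a cycle of odd length. Hence `a = 2`.
-/

open Finset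
open scoped symmDiff

namespace ZMod

variable {m : ℕ}

theorem forall_of_imp_add_one [NeZero m] {p : ZMod m → Prop} (h : ∀ i, p i → p (i + 1))
    {i : ZMod m} (hi : p i) (j : ZMod m) : p j := by
  have key : ∀ n : ℕ, p (i + n) := by
    intro n
    induction n with
    | zero => simpa using hi
    | succ n ih => simpa [add_assoc] using h _ ih
  simpa using key (j - i).val

theorem apply_eq_of_apply_add_one_eq [NeZero m] {β : Sort*} {f : ZMod m → β}
    (h : ∀ i, f (i + 1) = f i) (i j : ZMod m) : f i = f j :=
  forall_of_imp_add_one (p := fun j => f i = f j) (fun j hj => hj.trans (h j).symm) rfl j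

theorem not_forall_add_add_one_eq_one (hm : Odd m) (ε : ZMod m → ZMod 2) :
    ¬ ∀ i, ε i + ε (i + 1) = 1 := by
  intro h
  have : NeZero m := ⟨hm.pos.ne'⟩
  have hsum : ∑ i, (ε i + ε (i + 1)) = ∑ i, ε i + ∑ i, ε i := by
    rw [sum_add_distrib, ← Equiv.sum_comp (Equiv.addRight (1 : ZMod m)) ε]; rfl
  simp only [h, sum_const, card_univ, ZMod.card, nsmul_eq_mul, mul_one,
    CharTwo.add_self_eq_zero] at hsum
  exact natCast_ne_zero_iff_odd.2 hm hsum

end ZMod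

section LowerParity

variable {α : Type*} [LinearOrder α]

def lowerParity (s : Finset α) (e : α) : ZMod 2 := #{a ∈ s | a < e}

theorem lowerParity_union [DecidableEq α] {s t : Finset α} (h : Disjoint s t) (e : α) :
    lowerParity (s ∪ t) e = lowerParity s e + lowerParity t e := by
  simp only [lowerParity, filter_union, card_union_of_disjoint (disjoint_filter_filter h),
    Nat.cast_add]

theorem lowerParity_union_sdiff [DecidableEq α] (s t : Finset α) (e : α) :
    lowerParity (s ∪ t) e = lowerParity s e + lowerParity (t \ s) e := by
  rw [← lowerParity_union disjoint_sdiff, union_sdiff_self_eq_union]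

theorem lowerParity_insert_self [DecidableEq α] (s : Finset α) (a : α) :
    lowerParity (insert a s) a = lowerParity s a := by
  simp [lowerParity, filter_insert]

theorem lowerParity_singleton_add_lowerParity_singleton {a b : α} (h : a ≠ b) :
    lowerParity {a} b + lowerParity {b} a = 1 := by
  rcases h.lt_or_gt with h | h <;> simp [lowerParity, filter_singleton, h, h.not_gt]

theorem lowerParity_eq_of_ecolS_eq {n : ℕ} {s : Finset (Fin n)} {e : Fin n} {co : ℕ × ℕ}
    (h : ecolS s e = co) : lowerParity s e = co.2 := by
  simp [← h, ecolS, lowerParity, ZMod.natCast_mod]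

theorem not_forall_lowerParity_singleton {m : ℕ} (hm : Odd m) {σ : ZMod m → α}
    (hσ : ∀ i, σ i ≠ σ (i + 1)) (F : α → ZMod 2) (c : ZMod 2) :
    ¬ ∀ i, F (σ i) + lowerParity {σ (i + 1)} (σ i) = c ∧
      F (σ (i + 1)) + lowerParity {σ i} (σ (i + 1)) = c := by
  intro h
  refine ZMod.not_forall_add_add_one_eq_one hm (F ∘ σ) fun i => ?_
  obtain ⟨h₁, h₂⟩ := h i
  have := lowerParity_singleton_add_lowerParity_singleton (hσ i)
  simp only [Function.comp]
  linear_combination h₁ + h₂ - this + CharTwo.add_self_eq_zero c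
    - CharTwo.add_self_eq_zero (1 : ZMod 2)

end LowerParity

section ChangeSet

variable {α : Type*} [DecidableEq α] {m : ℕ} [NeZero m] (x : ZMod m → Finset α)

/-- The paper's `I(C)`. -/
def changeSet : Finset α := univ.biUnion fun i => x i ∆ x (i + 1)

theorem mem_changeSet {a : α} : a ∈ changeSet x ↔ ∃ i, a ∈ x i ∆ x (i + 1) := by
  simp [changeSet]

theorem symmDiff_subset_changeSet (i : ZMod m) : x i ∆ x (i + 1) ⊆ changeSet x :=
  fun _ ha => (mem_changeSet x).2 ⟨i, ha⟩

theorem sdiff_succ_subset_changeSet (i : ZMod m) : x i \ x (i + 1) ⊆ changeSet x :=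
  fun _ ha => symmDiff_subset_changeSet x i (mem_symmDiff.2 (Or.inl (mem_sdiff.1 ha)))

theorem succ_sdiff_subset_changeSet (i : ZMod m) : x (i + 1) \ x i ⊆ changeSet x :=
  fun _ ha => symmDiff_subset_changeSet x i (mem_symmDiff.2 (Or.inr (mem_sdiff.1 ha)))

theorem sdiff_changeSet_eq (i j : ZMod m) : x i \ changeSet x = x j \ changeSet x := by
  refine ZMod.apply_eq_of_apply_add_one_eq (f := fun i => x i \ changeSet x) (fun i => ?_) i j
  ext a
  have := @symmDiff_subset_changeSet _ _ _ _ x i a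
  simp only [mem_sdiff, mem_symmDiff] at this ⊢
  tauto

theorem union_changeSet_eq (i j : ZMod m) : x i ∪ changeSet x = x j ∪ changeSet x := by
  refine ZMod.apply_eq_of_apply_add_one_eq (f := fun i => x i ∪ changeSet x) (fun i => ?_) i j
  ext a
  have := @symmDiff_subset_changeSet _ _ _ _ x i a
  simp only [mem_union, mem_symmDiff] at this ⊢
  tauto

theorem changeSet_eq_biUnion_sdiff : changeSet x = univ.biUnion fun i => x i \ x (i + 1) := by
  refine Subset.antisymm (fun a ha => ?_)
    (biUnion_subset.2 fun i _ => sdiff_succ_subset_changeSet x i)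
  by_contra hleave
  simp only [mem_biUnion, mem_univ, true_and, mem_sdiff, not_exists, not_and_not_right] at hleave
  obtain ⟨i, hi⟩ := (mem_changeSet x).1 ha
  rcases mem_symmDiff.1 hi with ⟨hin, hout⟩ | ⟨hin, hout⟩ <;>
    exact hout (ZMod.forall_of_imp_add_one hleave hin _)

theorem subset_of_inter_changeSet_subset {S : Finset α} {i j : ZMod m} (hi : x i ⊆ S)
    (hj : x j ∩ changeSet x ⊆ S) : x j ⊆ S := by
  rw [← sdiff_union_inter (x j) (changeSet x), sdiff_changeSet_eq x j i]
  exact union_subset (sdiff_subset.trans hi) hj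

end ChangeSet

structure IsSwapCycle {α : Type*} [DecidableEq α] {m : ℕ} (x : ZMod m → Finset α) (k : ℕ) :
    Prop where
  card_eq : ∀ i, #(x i) = k
  card_union_succ : ∀ i, #(x i ∪ x (i + 1)) = k + 1

/-- The colour of the cube edge from `u` to `insert e u` has second coordinate
`lowerParity u e`; here every edge `x i — x i ∪ x (i + 1) — x (i + 1)` has it equal to `c`. -/
def IsMonochromatic {α : Type*} [DecidableEq α] [LinearOrder α] {m : ℕ} (x : ZMod m → Finset α)
    (c : ZMod 2) : Prop :=
  ∀ i, (∀ e ∈ x (i + 1) \ x i, lowerParity (x i) e = c) ∧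
    ∀ e ∈ x i \ x (i + 1), lowerParity (x (i + 1)) e = c

theorem isMonochromatic_of_ecolS {n m : ℕ} {x : ZMod m → Finset (Fin n)} {co : ℕ × ℕ}
    (h : ∀ i, (∀ j ∈ x i ∪ x (i + 1), j ∉ x i → ecolS (x i) j = co) ∧
      (∀ j ∈ x i ∪ x (i + 1), j ∉ x (i + 1) → ecolS (x (i + 1)) j = co)) :
    IsMonochromatic x co.2 := fun i =>
  ⟨fun e he => lowerParity_eq_of_ecolS_eq
    ((h i).1 e (mem_union_right _ (mem_sdiff.1 he).1) (mem_sdiff.1 he).2),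
   fun e he => lowerParity_eq_of_ecolS_eq
    ((h i).2 e (mem_union_left _ (mem_sdiff.1 he).1) (mem_sdiff.1 he).2)⟩

namespace IsSwapCycle

variable {α : Type*} [DecidableEq α] {m k : ℕ} {x : ZMod m → Finset α}

theorem card_sdiff_succ (hC : IsSwapCycle x k) (i : ZMod m) : #(x i \ x (i + 1)) = 1 := by
  have := card_sdiff_add_card (x i) (x (i + 1))
  rw [hC.card_union_succ, hC.card_eq] at this
  omega

theorem card_succ_sdiff (hC : IsSwapCycle x k) (i : ZMod m) : #(x (i + 1) \ x i) = 1 := by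
  have := card_sdiff_add_card (x (i + 1)) (x i)
  rw [union_comm, hC.card_union_succ, hC.card_eq] at this
  omega

variable [NeZero m]

theorem card_changeSet_le (hC : IsSwapCycle x k) : #(changeSet x) ≤ m := by
  rw [changeSet_eq_biUnion_sdiff]
  calc _ ≤ ∑ i, #(x i \ x (i + 1)) := card_biUnion_le
    _ = m := by simp [hC.card_sdiff_succ]

theorem card_inter_changeSet_eq (hC : IsSwapCycle x k) (i j : ZMod m) :
    #(x i ∩ changeSet x) = #(x j ∩ changeSet x) := by
  have hi := card_sdiff_add_card_inter (x i) (changeSet x)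
  have hj := card_sdiff_add_card_inter (x j) (changeSet x)
  rw [sdiff_changeSet_eq x i j, hC.card_eq] at hi
  rw [hC.card_eq] at hj
  omega

theorem card_changeSet_sdiff_eq (hC : IsSwapCycle x k) (i j : ZMod m) :
    #(changeSet x \ x i) = #(changeSet x \ x j) := by
  have hi := card_sdiff_add_card (changeSet x) (x i)
  have hj := card_sdiff_add_card (changeSet x) (x j)
  rw [union_comm, union_changeSet_eq x i j, hC.card_eq] at hi
  rw [union_comm, hC.card_eq] at hj
  omega

theorem card_changeSet_sdiff_union_add_one (hC : IsSwapCycle x k) (i : ZMod m) :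
    #(changeSet x \ (x i ∪ x (i + 1))) + 1 = #(changeSet x \ x i) := by
  have hy := card_sdiff_add_card (changeSet x) (x i ∪ x (i + 1))
  have hx := card_sdiff_add_card (changeSet x) (x i)
  rw [hC.card_union_succ, union_comm (changeSet x), union_assoc,
    union_changeSet_eq x (i + 1) i, ← union_assoc, union_self] at hy
  rw [union_comm (changeSet x), hC.card_eq] at hx
  omega

theorem card_inter_changeSet_pos (hC : IsSwapCycle x k) (i : ZMod m) :
    0 < #(x i ∩ changeSet x) :=
  (card_pos.2 (card_pos.1 (by rw [hC.card_sdiff_succ i]; omega))).trans_le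
    (card_le_card (subset_inter sdiff_subset (sdiff_succ_subset_changeSet x i)))

theorem card_changeSet_sdiff_pos (hC : IsSwapCycle x k) (i : ZMod m) :
    0 < #(changeSet x \ x i) :=
  (card_pos.2 (card_pos.1 (by rw [hC.card_succ_sdiff i]; omega))).trans_le
    (card_le_card fun _ ha =>
      mem_sdiff.2 ⟨succ_sdiff_subset_changeSet x i ha, (mem_sdiff.1 ha).2⟩)

theorem card_changeSet_sdiff_ne_one (hC : IsSwapCycle x k) {i : ZMod m}
    (hchord : ¬ x (i + 1 + 1) ⊆ x i ∪ x (i + 1)) : #(changeSet x \ x i) ≠ 1 := by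
  intro h
  have hI : changeSet x ⊆ x i ∪ x (i + 1) := by
    rw [← sdiff_eq_empty_iff_subset, ← card_eq_zero]
    have := hC.card_changeSet_sdiff_union_add_one i
    omega
  exact hchord (subset_of_inter_changeSet_subset x subset_union_left
    (inter_subset_right.trans hI))

theorem card_inter_changeSet_ne_one [LinearOrder α] (hC : IsSwapCycle x k) (hm : Odd m)
    {c : ZMod 2} (hcol : IsMonochromatic x c) (i : ZMod m) : #(x i ∩ changeSet x) ≠ 1 := by
  intro h
  choose σ hσ using fun j => card_eq_one.1 ((hC.card_inter_changeSet_eq j i).trans h)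
  have hleave : ∀ j, σ j ∈ x j \ x (j + 1) := fun j => by
    have hne : (x j \ x (j + 1)).Nonempty := card_pos.1 (by rw [hC.card_sdiff_succ]; omega)
    rw [hne.subset_singleton_iff.1 (hσ j ▸ subset_inter sdiff_subset
      (sdiff_succ_subset_changeSet x j))]
    exact mem_singleton_self _
  have henter : ∀ j, σ (j + 1) ∈ x (j + 1) \ x j := fun j => by
    have hne : (x (j + 1) \ x j).Nonempty := card_pos.1 (by rw [hC.card_succ_sdiff]; omega)
    rw [hne.subset_singleton_iff.1 (hσ (j + 1) ▸ subset_inter sdiff_subset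
      (succ_sdiff_subset_changeSet x j))]
    exact mem_singleton_self _
  have hx : ∀ j e, lowerParity (x j) e =
      lowerParity (x i \ changeSet x) e + lowerParity {σ j} e := fun j e => by
    rw [← hσ j, sdiff_changeSet_eq x i j, ← lowerParity_union (disjoint_sdiff_inter _ _),
      sdiff_union_inter]
  refine not_forall_lowerParity_singleton hm (σ := σ)
    (fun j h => (mem_sdiff.1 (hleave j)).2 (h ▸ (mem_sdiff.1 (henter j)).1))
    (lowerParity (x i \ changeSet x)) c fun j => ⟨?_, ?_⟩
  · rw [← hx]
    exact (hcol j).2 _ (hleave j)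
  · rw [← hx]
    exact (hcol j).1 _ (henter j)

theorem card_changeSet_sdiff_ne_two [LinearOrder α] (hC : IsSwapCycle x k) (hm : Odd m)
    (hchord : ∀ j, ¬ x j ⊆ x (j + 1) ∪ x (j + 1 + 1)) {c : ZMod 2} (hcol : IsMonochromatic x c)
    (i : ZMod m) : #(changeSet x \ x i) ≠ 2 := by
  intro h
  have hb : ∀ j, #(changeSet x \ x j) = 2 := fun j => (hC.card_changeSet_sdiff_eq j i).trans h
  choose τ hτ using fun j => card_eq_one.1 (by
    have := hC.card_changeSet_sdiff_union_add_one j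
    have := hb j
    omega : #(changeSet x \ (x j ∪ x (j + 1))) = 1)
  have hτmem : ∀ j, τ j ∈ changeSet x ∧ τ j ∉ x j ∧ τ j ∉ x (j + 1) := fun j => by
    have := mem_singleton_self (τ j)
    rwa [← hτ j, mem_sdiff, mem_union, not_or] at this
  have hprev : ∀ j, τ (j + 1) ∈ x j := by
    -- otherwise `x j ∩ I` misses the only coordinate of `I` outside `y (j + 1)`: a chord
    intro j
    by_contra hτj
    refine hchord j (subset_of_inter_changeSet_subset x (i := j + 1) subset_union_left
      fun a ha => ?_)
    by_contra ha'
    have : a ∈ changeSet x \ (x (j + 1) ∪ x (j + 1 + 1)) := mem_sdiff.2 ⟨(mem_inter.1 ha).2, ha'⟩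
    rw [hτ, mem_singleton] at this
    exact hτj (this ▸ (mem_inter.1 ha).1)
  have hne : ∀ j, τ j ≠ τ (j + 1) := fun j h => (hτmem j).2.1 (h ▸ hprev j)
  have hB : ∀ j, changeSet x \ x (j + 1) = {τ j, τ (j + 1)} := fun j => by
    refine (eq_of_subset_of_card_le (insert_subset_iff.2 ⟨?_, singleton_subset_iff.2 ?_⟩)
      (by rw [hb, card_pair (hne j)])).symm
    · exact mem_sdiff.2 ⟨(hτmem j).1, (hτmem j).2.2⟩
    · exact mem_sdiff.2 ⟨(hτmem (j + 1)).1, (hτmem (j + 1)).2.1⟩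
  have henter : ∀ j, τ j ∈ x (j + 1 + 1) \ x (j + 1) := by
    intro j
    refine mem_sdiff.2 ⟨?_, (hτmem j).2.2⟩
    by_contra h'
    have : τ j ∈ changeSet x \ x (j + 1 + 1) := mem_sdiff.2 ⟨(hτmem j).1, h'⟩
    rw [hB (j + 1), mem_insert, mem_singleton] at this
    rcases this with h | h
    · exact hne j h
    · exact (hτmem j).2.2 (h ▸ hprev (j + 1))
  have hx : ∀ j e, lowerParity (x (j + 1)) e =
      lowerParity (x i ∪ changeSet x) e + lowerParity {τ j, τ (j + 1)} e := fun j e => by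
    rw [← union_changeSet_eq x (j + 1) i, lowerParity_union_sdiff, hB, add_assoc,
      CharTwo.add_self_eq_zero, add_zero]
  refine not_forall_lowerParity_singleton hm hne (lowerParity (x i ∪ changeSet x)) c
    fun j => ⟨?_, ?_⟩
  · have := (hcol (j + 1)).1 _ (henter j)
    rwa [hx, lowerParity_insert_self] at this
  · have := (hcol j).2 _ (mem_sdiff.2 ⟨hprev j, (hτmem (j + 1)).2.1⟩)
    rwa [hx, pair_comm, lowerParity_insert_self] at this

end IsSwapCycle

theorem stmt9_general (n k : ℕ) (x y : ZMod 5 → Finset (Fin n))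
    (hxcard : ∀ i, (x i).card = k)
    (hy : ∀ i, y i = x i ∪ x (i + 1))
    (hycard : ∀ i, (y i).card = k + 1)
    (hinduced : ∀ i j : ZMod 5, i ≠ j → i ≠ j + 1 → ¬ x i ⊆ y j)
    (hmono : ∃ co : ℕ × ℕ, ∀ i : ZMod 5,
      (∀ j ∈ y i, j ∉ x i → ecolS (x i) j = co) ∧
      (∀ j ∈ y i, j ∉ x (i + 1) → ecolS (x (i + 1)) j = co)) :
    ∀ i : ZMod 5,
      {a : Fin n | (∃ i' : ZMod 5,
          (a ∈ x i' ∧ a ∉ x (i' + 1)) ∨ (a ∉ x i' ∧ a ∈ x (i' + 1))) ∧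
        a ∈ x i}.ncard = 2 := by
  obtain rfl : y = fun i => x i ∪ x (i + 1) := funext hy
  obtain ⟨co, hco⟩ := hmono
  have hC : IsSwapCycle x k := ⟨hxcard, hycard⟩
  have hcol := isMonochromatic_of_ecolS hco
  have hodd : Odd 5 := by decide
  have hb1 := hC.card_changeSet_sdiff_ne_one (i := 0) (hinduced 2 0 (by decide) (by decide))
  have hb2 := hC.card_changeSet_sdiff_ne_two hodd
    (fun j => hinduced j (j + 1) (by revert j; decide) (by revert j; decide)) hcol 0
  intro i
  suffices h : #(x i ∩ changeSet x) = 2 by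
    rw [← h, ← Set.ncard_coe_finset]
    congr
    ext a
    simp [mem_changeSet, mem_symmDiff, and_comm]
  have hsplit := card_inter_add_card_sdiff (changeSet x) (x i)
  rw [inter_comm] at hsplit
  have hI := hC.card_changeSet_le
  have hb := hC.card_changeSet_sdiff_eq i 0
  have ha0 := hC.card_inter_changeSet_pos i
  have hb0 := hC.card_changeSet_sdiff_pos 0
  have ha1 := hC.card_inter_changeSet_ne_one hodd hcol i
  omega

/-- For an induced 10-cycle `x₁,y₁,…,x₅,y₅` in `Q_n` (alternating between
levels `k` and `k+1`, `yᵢ = xᵢ ∪ xᵢ₊₁`, no chord in `Q_n`) that is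
monochromatic under the coloring `c`, every row of the associated matrix
`A(C)` (the restriction of `xᵢ` to `I(C)`) contains exactly two 1's. -/
theorem stmt9 (n k : ℕ) (x y : ZMod 5 → Finset (Fin n))
    (hxinj : Function.Injective x)
    (hxcard : ∀ i, (x i).card = k)
    (hy : ∀ i, y i = x i ∪ x (i + 1))
    (hycard : ∀ i, (y i).card = k + 1)
    (hyinj : Function.Injective y)
    (hinduced : ∀ i j : ZMod 5, i ≠ j → i ≠ j + 1 → ¬ x i ⊆ y j)
    (hmono : ∃ co : ℕ × ℕ, ∀ i : ZMod 5,
      (∀ j ∈ y i, j ∉ x i → ecolS (x i) j = co) ∧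
      (∀ j ∈ y i, j ∉ x (i + 1) → ecolS (x (i + 1)) j = co)) :
    ∀ i : ZMod 5,
      {a : Fin n | (∃ i' : ZMod 5,
          (a ∈ x i' ∧ a ∉ x (i' + 1)) ∨ (a ∉ x i' ∧ a ∈ x (i' + 1))) ∧
        a ∈ x i}.ncard = 2 :=
  stmt9_general n k x y hxcard hy hycard hinduced hmono
end

section
/- Let C = x_1, y_1, ..., x_5, y_5, x_1 be a 10-cycle in Q_n alternating between levels k and k+1 with y_i = x_i ∪ x_{i+1}, all x_i distinct and all y_i distinct. If there are three indices i_1, i_2, i_3 and two coordinates j_1, j_2 ∈ I(C) such that x_{i_1}, x_{i_2}, x_{i_3} all have 0 in coordinates j_1 and j_2 (as entries of the matrix A(C)), then C has a chord in Q_n, i.e., C is not an induced cycle. -/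
/-!
Off `I(C)` all the `xᵢ` agree, so `xᵢ` is determined by its row of `A(C)`; in particular
consecutive rows differ. Three indices of the 5-cycle contain two consecutive ones `a, a + 1`
and a third `c`. Their rows are 2-subsets of the 3-set `I(C) \ {j₁, j₂}`, and two distinct
2-subsets of a 3-set cover it, so row `c` lies in the union of rows `a` and `a + 1`. Hence
`x_c ⊆ x_a ∪ x_{a+1} = y_a`, a chord.
-/

theorem ZMod.iff_of_forall_iff_add_one {m : ℕ} [NeZero m] {P : ZMod m → Prop}
    (h : ∀ i, P i ↔ P (i + 1)) (i j : ZMod m) : P i ↔ P j := by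
  have hk : ∀ k : ℕ, P i ↔ P (i + k) := by
    intro k
    induction k with
    | zero => simp
    | succ k ih => rw [Nat.cast_succ, ← add_assoc]; exact ih.trans (h _)
  simpa using hk (j - i).val

theorem ZMod.exists_add_one_mem_of_three_le_card (S : Finset (ZMod 5)) (hS : 3 ≤ S.card) :
    ∃ a ∈ S, a + 1 ∈ S ∧ ∃ c ∈ S, c ≠ a ∧ c ≠ a + 1 := by
  revert S; decide

theorem Set.union_eq_of_ncard_eq_of_ne {α : Type*} {s t u : Set α} (hu : u.Finite)
    (hs : s ⊆ u) (ht : t ⊆ u) (hst : s ≠ t) (hcard : t.ncard = s.ncard)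
    (hu_card : u.ncard ≤ s.ncard + 1) : s ∪ t = u := by
  have hts : ¬ t ⊆ s := fun h =>
    hst (Set.eq_of_subset_of_ncard_le h hcard.ge (hu.subset hs)).symm
  have hlt := Set.ncard_lt_ncard (Set.ssubset_union_left_iff.mpr hts)
    (hu.subset (Set.union_subset hs ht))
  exact Set.eq_of_subset_of_ncard_le (Set.union_subset hs ht) (by omega) hu

section CyclicSequence

variable {α : Type*} {m : ℕ} (x : ZMod m → Finset α)

/-- The set `I(C)` of coordinates that change somewhere along the cyclic sequence `x`. -/
def flipCoords : Set α :=
  {a | ∃ i : ZMod m, (a ∈ x i ∧ a ∉ x (i + 1)) ∨ (a ∉ x i ∧ a ∈ x (i + 1))}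

/-- Row `i` of the matrix `A(C)`, as the set of columns holding a `1`. -/
def flipRow (i : ZMod m) : Set α :=
  {a | a ∈ flipCoords x ∧ a ∈ x i}

variable {x} [NeZero m]

theorem mem_iff_mem_of_not_mem_flipCoords {a : α} (ha : a ∉ flipCoords x) (i j : ZMod m) :
    a ∈ x i ↔ a ∈ x j :=
  ZMod.iff_of_forall_iff_add_one (P := fun i => a ∈ x i)
    (fun i => by by_contra h; exact ha ⟨i, by tauto⟩) i j

theorem flipRow_injective_of_injective (hx : Function.Injective x) :
    Function.Injective (flipRow x) := by
  intro i j h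
  apply hx
  ext a
  by_cases ha : a ∈ flipCoords x
  · exact ⟨fun hai => (h ▸ ⟨ha, hai⟩ : a ∈ flipRow x j).2,
      fun haj => (h ▸ ⟨ha, haj⟩ : a ∈ flipRow x i).2⟩
  · exact mem_iff_mem_of_not_mem_flipCoords ha i j

theorem subset_union_of_flipRow_subset [DecidableEq α] {i j k : ZMod m}
    (h : flipRow x i ⊆ flipRow x j ∪ flipRow x k) : x i ⊆ x j ∪ x k := by
  intro a hai
  by_cases ha : a ∈ flipCoords x
  · rcases h ⟨ha, hai⟩ with haj | hak
    exacts [Finset.mem_union_left _ haj.2, Finset.mem_union_right _ hak.2]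
  · exact Finset.mem_union_left _ ((mem_iff_mem_of_not_mem_flipCoords ha i j).mp hai)

end CyclicSequence

theorem stmt10_general (n : ℕ) (x y : ZMod 5 → Finset (Fin n))
    (hxinj : Function.Injective x)
    (hy : ∀ i, y i = x i ∪ x (i + 1))
    (hI5 : {a : Fin n | ∃ i : ZMod 5,
        (a ∈ x i ∧ a ∉ x (i + 1)) ∨ (a ∉ x i ∧ a ∈ x (i + 1))}.ncard = 5)
    (hrows : ∀ i : ZMod 5,
      {a : Fin n | (∃ i' : ZMod 5,
          (a ∈ x i' ∧ a ∉ x (i' + 1)) ∨ (a ∉ x i' ∧ a ∈ x (i' + 1))) ∧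
        a ∈ x i}.ncard = 2)
    (j₁ j₂ : Fin n) (hj : j₁ ≠ j₂)
    (hj₁ : ∃ i : ZMod 5, (j₁ ∈ x i ∧ j₁ ∉ x (i + 1)) ∨ (j₁ ∉ x i ∧ j₁ ∈ x (i + 1)))
    (hj₂ : ∃ i : ZMod 5, (j₂ ∈ x i ∧ j₂ ∉ x (i + 1)) ∨ (j₂ ∉ x i ∧ j₂ ∈ x (i + 1)))
    (i₁ i₂ i₃ : ZMod 5) (h12 : i₁ ≠ i₂) (h13 : i₁ ≠ i₃) (h23 : i₂ ≠ i₃)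
    (hz : ∀ i ∈ ({i₁, i₂, i₃} : Set (ZMod 5)), j₁ ∉ x i ∧ j₂ ∉ x i) :
    ∃ i j : ZMod 5, i ≠ j ∧ i ≠ j + 1 ∧ x i ⊆ y j := by
  obtain ⟨a, ha, ha1, c, hc, hca, hca1⟩ := ZMod.exists_add_one_mem_of_three_le_card
    {i₁, i₂, i₃} (Finset.card_eq_three.mpr ⟨i₁, i₂, i₃, h12, h13, h23, rfl⟩).ge
  set T := flipCoords x \ {j₁, j₂}
  have hT : T.ncard = 3 := by
    rw [Set.ncard_sdiff (Set.pair_subset (s := flipCoords x) hj₁ hj₂), Set.ncard_pair hj]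
    exact congrArg (· - 2) hI5
  have hrowT : ∀ i ∈ ({i₁, i₂, i₃} : Finset (ZMod 5)), flipRow x i ⊆ T := by
    intro i hi a ⟨haI, hai⟩
    have hzi := hz i (by simpa using hi)
    exact ⟨haI, by rintro (rfl | rfl) <;> simp_all⟩
  have hcover : flipRow x a ∪ flipRow x (a + 1) = T :=
    Set.union_eq_of_ncard_eq_of_ne T.toFinite (hrowT a ha) (hrowT _ ha1)
      ((flipRow_injective_of_injective hxinj).ne (by simp [show (1 : ZMod 5) ≠ 0 by decide]))
      ((hrows _).trans (hrows a).symm) (by rw [hT, show (flipRow x a).ncard = 2 from hrows a])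
  exact ⟨c, a, hca, hca1, hy a ▸ subset_union_of_flipRow_subset (hcover ▸ hrowT c hc)⟩

/-- For a 10-cycle `x₁,y₁,…,x₅,y₅` in `Q_n` (alternating between levels `k` and
`k+1`, `yᵢ = xᵢ ∪ xᵢ₊₁`, with `|I(C)| = 5` and each row of `A(C)` having exactly
two 1's), if three rows of `A(C)` have 0's in the same two columns `j₁ ≠ j₂`,
then `C` has a chord in `Q_n`, i.e. `C` is not induced. -/
theorem stmt10 (n k : ℕ) (x y : ZMod 5 → Finset (Fin n))
    (hxinj : Function.Injective x)
    (hxcard : ∀ i, (x i).card = k)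
    (hy : ∀ i, y i = x i ∪ x (i + 1))
    (hycard : ∀ i, (y i).card = k + 1)
    (hyinj : Function.Injective y)
    (hI5 : {a : Fin n | ∃ i : ZMod 5,
        (a ∈ x i ∧ a ∉ x (i + 1)) ∨ (a ∉ x i ∧ a ∈ x (i + 1))}.ncard = 5)
    (hrows : ∀ i : ZMod 5,
      {a : Fin n | (∃ i' : ZMod 5,
          (a ∈ x i' ∧ a ∉ x (i' + 1)) ∨ (a ∉ x i' ∧ a ∈ x (i' + 1))) ∧
        a ∈ x i}.ncard = 2)
    (j₁ j₂ : Fin n) (hj : j₁ ≠ j₂)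
    (hj₁ : ∃ i : ZMod 5, (j₁ ∈ x i ∧ j₁ ∉ x (i + 1)) ∨ (j₁ ∉ x i ∧ j₁ ∈ x (i + 1)))
    (hj₂ : ∃ i : ZMod 5, (j₂ ∈ x i ∧ j₂ ∉ x (i + 1)) ∨ (j₂ ∉ x i ∧ j₂ ∈ x (i + 1)))
    (i₁ i₂ i₃ : ZMod 5) (h12 : i₁ ≠ i₂) (h13 : i₁ ≠ i₃) (h23 : i₂ ≠ i₃)
    (hz : ∀ i ∈ ({i₁, i₂, i₃} : Set (ZMod 5)), j₁ ∉ x i ∧ j₂ ∉ x i) :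
    ∃ i j : ZMod 5, i ≠ j ∧ i ≠ j + 1 ∧ x i ⊆ y j :=
  stmt10_general n x y hxinj hy hI5 hrows j₁ j₂ hj hj₁ hj₂ i₁ i₂ i₃ h12 h13 h23 hz
end

section
/- Let G be a subgraph of Q_n with no cycle of length 4k+2, and let v be a vertex of Q_n. Define the graph H_v on the neighbors of v in Q_n, where u and w are adjacent in H_v iff there is a path u, x, w in G with x ≠ v. Then H_v contains no cycle of length 2k+1. -/
/-!
In `Q_n` two distinct vertices have at most two common neighbours, and adjacent ones have none.
Hence a midpoint `x ≠ v` of an edge `u w` of `H_v` has exactly `u` and `w` as common neighbours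
with `v`: distinct edges of `H_v` have distinct midpoints, and no midpoint lies on the cycle.
Interleaving a `(2k+1)`-cycle of `H_v` with its midpoints therefore gives a `(4k+2)`-cycle in `G`.
-/

open Finset Function
open scoped symmDiff

theorem Finset.singleton_symmDiff_singleton {α : Type*} [DecidableEq α] {i j : α} (h : i ≠ j) :
    ({i} ∆ {j} : Finset α) = {i, j} :=
  (disjoint_singleton.2 h).symmDiff_eq_sup

def hypercube (ι : Type*) [Fintype ι] : SimpleGraph (ι → Bool) where
  Adj a b := hammingDist a b = 1
  symm.symm a b h := by rwa [hammingDist_comm]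
  loopless.irrefl a h := by simp at h

section Hypercube

variable {ι : Type*} [Fintype ι]

def diffCoords (a b : ι → Bool) : Finset ι := {l | a l ≠ b l}

theorem card_diffCoords (a b : ι → Bool) : #(diffCoords a b) = hammingDist a b := rfl

variable {a b z : ι → Bool}

theorem diffCoords_injective (a : ι → Bool) : Injective (diffCoords a) := by
  intro z w h
  funext l
  have hl := congrArg (l ∈ ·) h
  simp only [diffCoords, mem_filter, mem_univ, true_and, eq_iff_iff] at hl
  revert hl
  cases a l <;> cases z l <;> cases w l <;> decide

theorem hypercube_adj_iff : (hypercube ι).Adj a b ↔ ∃ i, diffCoords a b = {i} :=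
  card_eq_one

variable [DecidableEq ι]

theorem diffCoords_eq_symmDiff (a b c : ι → Bool) :
    diffCoords a c = diffCoords a b ∆ diffCoords b c := by
  ext l
  simp only [diffCoords, mem_symmDiff, mem_filter, mem_univ, true_and]
  cases a l <;> cases b l <;> cases c l <;> decide

theorem exists_diffCoords_of_adj_of_adj (ha : (hypercube ι).Adj a z)
    (hb : (hypercube ι).Adj z b) :
    ∃ i j, diffCoords a z = {i} ∧ diffCoords a b = {i} ∆ {j} := by
  obtain ⟨i, hi⟩ := hypercube_adj_iff.1 ha
  obtain ⟨j, hj⟩ := hypercube_adj_iff.1 hb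
  exact ⟨i, j, hi, by rw [diffCoords_eq_symmDiff a z b, hi, hj]⟩

theorem hypercube_not_adj_of_adj_of_adj (ha : (hypercube ι).Adj a z)
    (hb : (hypercube ι).Adj z b) : ¬(hypercube ι).Adj a b := by
  obtain ⟨i, j, -, hab⟩ := exists_diffCoords_of_adj_of_adj ha hb
  change #(diffCoords a b) ≠ 1
  rw [hab]
  by_cases hij : i = j
  · simp [hij]
  · simp [singleton_symmDiff_singleton hij, hij]

theorem exists_diffCoords_of_mem_commonNeighbors (hab : a ≠ b)
    (hz : z ∈ (hypercube ι).commonNeighbors a b) :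
    ∃ i j, diffCoords a z = {i} ∧ diffCoords a b = {i, j} := by
  obtain ⟨i, j, hi, hij⟩ := exists_diffCoords_of_adj_of_adj hz.1 hz.2.symm
  refine ⟨i, j, hi, ?_⟩
  rcases eq_or_ne i j with rfl | hne
  · rw [symmDiff_self, bot_eq_empty, ← card_eq_zero, card_diffCoords] at hij
    exact absurd (hammingDist_eq_zero.1 hij) hab
  · rwa [singleton_symmDiff_singleton hne] at hij

theorem hypercube_eq_or_eq_of_mem_commonNeighbors {z₁ z₂ w : ι → Bool} (hab : a ≠ b)
    (hz : z₁ ≠ z₂) (h₁ : z₁ ∈ (hypercube ι).commonNeighbors a b)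
    (h₂ : z₂ ∈ (hypercube ι).commonNeighbors a b)
    (hw : w ∈ (hypercube ι).commonNeighbors a b) : w = z₁ ∨ w = z₂ := by
  obtain ⟨i₁, j₁, hi₁, hab₁⟩ := exists_diffCoords_of_mem_commonNeighbors hab h₁
  obtain ⟨i₂, _, hi₂, hab₂⟩ := exists_diffCoords_of_mem_commonNeighbors hab h₂
  obtain ⟨i, _, hi, hab'⟩ := exists_diffCoords_of_mem_commonNeighbors hab hw
  have hne : i₂ ≠ i₁ := by
    rintro rfl
    exact hz (diffCoords_injective a (hi₁.trans hi₂.symm))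
  have hi₂_mem : i₂ ∈ ({i₁, j₁} : Finset ι) := by simp [← hab₁, hab₂]
  have hi_mem : i ∈ ({i₁, j₁} : Finset ι) := by simp [← hab₁, hab']
  simp only [mem_insert, mem_singleton, hne, false_or] at hi₂_mem hi_mem
  rcases hi_mem with rfl | rfl
  · exact .inl (diffCoords_injective a (hi.trans hi₁.symm))
  · exact .inr (diffCoords_injective a (hi.trans (hi₂_mem ▸ hi₂).symm))

theorem hypercube_sym2_eq_of_mem_commonNeighbors {z₁ z₂ w₁ w₂ : ι → Bool} (hab : a ≠ b)
    (hz : z₁ ≠ z₂) (hw : w₁ ≠ w₂) (hz₁ : z₁ ∈ (hypercube ι).commonNeighbors a b)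
    (hz₂ : z₂ ∈ (hypercube ι).commonNeighbors a b)
    (hw₁ : w₁ ∈ (hypercube ι).commonNeighbors a b)
    (hw₂ : w₂ ∈ (hypercube ι).commonNeighbors a b) : s(w₁, w₂) = s(z₁, z₂) := by
  rcases hypercube_eq_or_eq_of_mem_commonNeighbors hab hz hz₁ hz₂ hw₁ with rfl | rfl <;>
  rcases hypercube_eq_or_eq_of_mem_commonNeighbors hab hz hz₁ hz₂ hw₂ with rfl | rfl <;>
  simp_all [Sym2.eq_swap]

end Hypercube

theorem eq_of_sym2_mk_add_one_eq {R : Type*} [AddGroupWithOne R] (h2 : (2 : R) ≠ 0) {i j : R}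
    (h : s(i, i + 1) = s(j, j + 1)) : i = j := by
  rcases Sym2.eq_iff.1 h with ⟨hij, -⟩ | ⟨hij, hji⟩
  · exact hij
  · refine absurd ?_ h2
    rw [hij, add_assoc, one_add_one_eq_two, add_eq_left] at hji
    exact hji

section Interleave

variable {α : Type*} {m : ℕ} (u x : ZMod m → α)

def interleave (t : ℕ) : α := if t % 2 = 0 then u (t / 2 : ℕ) else x (t / 2 : ℕ)

theorem interleave_periodic : Periodic (interleave u x) (2 * m) := by
  intro t
  simp only [interleave, show (t + 2 * m) % 2 = t % 2 by omega,
    show (t + 2 * m) / 2 = t / 2 + m by omega, Nat.cast_add, ZMod.natCast_self, add_zero]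

theorem interleave_rel {r : α → α → Prop} (hux : ∀ i, r (u i) (x i))
    (hxu : ∀ i, r (x i) (u (i + 1))) (t : ℕ) : r (interleave u x t) (interleave u x (t + 1)) := by
  rcases Nat.even_or_odd' t with ⟨s, rfl | rfl⟩
  · simp only [interleave, show (2 * s + 1) % 2 = 1 by omega, show (2 * s + 1) / 2 = s by omega]
    simpa using hux s
  · simp only [interleave, show (2 * s + 1 + 1) % 2 = 0 by omega,
      show (2 * s + 1 + 1) / 2 = s + 1 by omega, show (2 * s + 1) / 2 = s by omega]
    simpa using hxu s

variable {u x}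

theorem interleave_injOn (hu : Injective u) (hx : Injective x) (hux : ∀ i j, u i ≠ x j) :
    Set.InjOn (interleave u x) (Set.Iio (2 * m)) := by
  intro s hs t ht h
  simp only [Set.mem_Iio] at hs ht
  have hhalf (h : ((s / 2 : ℕ) : ZMod m) = (t / 2 : ℕ)) : s / 2 = t / 2 := by
    rwa [ZMod.natCast_eq_natCast_iff', Nat.mod_eq_of_lt (by omega),
      Nat.mod_eq_of_lt (by omega)] at h
  unfold interleave at h
  split_ifs at h
  · have := hhalf (hu h); omega
  · exact absurd h (hux _ _)
  · exact absurd h.symm (hux _ _)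
  · have := hhalf (hx h); omega

theorem exists_injective_cycle_of_interleave [NeZero m] {r : α → α → Prop} (hu : Injective u)
    (hx : Injective x) (hne : ∀ i j, u i ≠ x j) (hux : ∀ i, r (u i) (x i))
    (hxu : ∀ i, r (x i) (u (i + 1))) :
    ∃ w : ZMod (2 * m) → α, Injective w ∧ ∀ j, r (w j) (w (j + 1)) := by
  refine ⟨fun j => interleave u x j.val, fun j j' h => ZMod.val_injective _
    (interleave_injOn hu hx hne (ZMod.val_lt j) (ZMod.val_lt j') h), fun j => ?_⟩
  have hval : (j + 1).val = (j.val + 1) % (2 * m) := by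
    rw [← ZMod.val_natCast, Nat.cast_add, ZMod.natCast_zmod_val, Nat.cast_one]
  simp only [hval, (interleave_periodic u x).map_mod_nat]
  exact interleave_rel u x hux hxu j.val

end Interleave

/-- Let `G` be a subgraph of `Q_n` with no cycle of length `4k+2` (`k ≥ 1`) and
let `v` be a vertex of `Q_n`. The auxiliary graph `H_v` on the `Q_n`-neighbors
of `v`, where `u ~ w` iff there is a path `u, x, w` in `G` with `x ≠ v`,
contains no cycle of length `2k+1`. -/
theorem stmt13 (n k : ℕ) (hk : 1 ≤ k) (G : SimpleGraph (Fin n → Bool))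
    (hG : ∀ x y, G.Adj x y → hammingDist x y = 1)
    (hnocycle : ¬ ∃ v : ZMod (4 * k + 2) → (Fin n → Bool),
      Function.Injective v ∧ ∀ i, G.Adj (v i) (v (i + 1)))
    (v : Fin n → Bool) :
    ¬ ∃ u : ZMod (2 * k + 1) → (Fin n → Bool),
      Function.Injective u ∧
      (∀ i, hammingDist (u i) v = 1) ∧
      (∀ i, ∃ x, x ≠ v ∧ G.Adj (u i) x ∧ G.Adj x (u (i + 1))) := by
  rintro ⟨u, hu, huv, hmid⟩
  choose x hxv hux hxu using hmid
  have hGQ : G ≤ hypercube (Fin n) := hG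
  have huQ : ∀ i, (hypercube (Fin n)).Adj (u i) v := huv
  have h2 : (2 : ZMod (2 * k + 1)) ≠ 0 := fun h => by
    have := Nat.le_of_dvd two_pos ((ZMod.natCast_eq_zero_iff 2 _).1 (mod_cast h))
    omega
  have hu_succ (i : ZMod (2 * k + 1)) : u i ≠ u (i + 1) := by
    have : Fact (1 < 2 * k + 1) := ⟨by omega⟩
    exact hu.ne (by simp)
  have hmem (i : ZMod (2 * k + 1)) :
      u i ∈ (hypercube _).commonNeighbors (x i) v ∧
        u (i + 1) ∈ (hypercube _).commonNeighbors (x i) v :=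
    ⟨⟨(hGQ (hux i)).symm, (huQ i).symm⟩, ⟨hGQ (hxu i), (huQ (i + 1)).symm⟩⟩
  have hx : Function.Injective x := fun i j hij => by
    refine eq_of_sym2_mk_add_one_eq h2 (Sym2.map.injective hu ?_)
    rw [Sym2.map_mk, Sym2.map_mk]
    exact hypercube_sym2_eq_of_mem_commonNeighbors (hxv j) (hu_succ j) (hu_succ i)
      (hmem j).1 (hmem j).2 (hij ▸ (hmem i).1) (hij ▸ (hmem i).2)
  have hu_ne_x (i j : ZMod (2 * k + 1)) : u i ≠ x j := fun h =>
    hypercube_not_adj_of_adj_of_adj (h ▸ hGQ (hux j)) (huQ i) (huQ j)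
  rw [show 4 * k + 2 = 2 * (2 * k + 1) by ring] at hnocycle
  exact hnocycle (exists_injective_cycle_of_interleave hu hx hu_ne_x hux hxu)
end
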